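/- One step of the linked-list Turing machine simulation is correct for right moves: if the implementation configuration of a linked-cell state with head pointer h and control state q is (q, t), δ(q, t(0)) = (q', s', R), and the update (i) writes s' to h.symbol, (ii) if h.right = none allocates a fresh cell with symbol B, left pointer h, right pointer none, and sets h.right to it, (iii) moves head to h.right, then the implementation configuration of the resulting state is exactly (q', t') where (q, t) → (q', t') in the Turing machine. -/

import Mathlib

/-!
From head `c k`, a linked list `c` with symbols `S` induces the tape `i ↦ S (k + i)`, blank
outside `0, …, n`. A right step leaves a linked list whose symbols are `S` with `s'` written at
`k` (at the last cell, extended by the fresh blank cell), with the head at index `k + 1`.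
Appending a blank cell does not change the induced tape, so the new tape is
`i ↦ S[k ↦ s'] (k + 1 + i)`, which is the shifted old tape with `s'` at position `-1`.
-/

inductive Dir | L | R

/-- A tape cell: optional left and right pointers and a symbol. -/
structure Cell (Γ L : Type*) where
  left : Option L
  right : Option L
  symbol : Γ

def followR {Γ L : Type*} (σ : L → Option (Cell Γ L)) : Option L → ℕ → Option L
  | ol, 0 => ol
  | ol, k + 1 => followR σ (ol.bind fun ℓ => (σ ℓ).bind Cell.right) k

def followL {Γ L : Type*} (σ : L → Option (Cell Γ L)) : Option L → ℕ → Option L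
  | ol, 0 => ol
  | ol, k + 1 => followL σ (ol.bind fun ℓ => (σ ℓ).bind Cell.left) k

def symAt {Γ L : Type*} (σ : L → Option (Cell Γ L)) (B : Γ) (ol : Option L) : Γ :=
  match ol.bind σ with
  | some c => c.symbol
  | none => B

/-- Tape induced by a head pointer. -/
def tapeOf {Γ L : Type*} (σ : L → Option (Cell Γ L)) (B : Γ) (h : L) : ℤ → Γ :=
  fun i =>
    if 0 ≤ i then symAt σ B (followR σ (some h) i.toNat)
    else symAt σ B (followL σ (some h) (-i).toNat)

/-- Right-move update: write `s'` to the head cell, allocate a fresh blank cell to the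
right if needed, and move the head right. Returns the new cell map and new head. -/
def stepR {Γ L : Type*} [DecidableEq L] (σ : L → Option (Cell Γ L)) (B : Γ)
    (h : L) (s' : Γ) (fresh : L) : (L → Option (Cell Γ L)) × L :=
  match σ h with
  | none => (σ, h)
  | some cl =>
    match cl.right with
    | some r => (Function.update σ h (some ⟨cl.left, cl.right, s'⟩), r)
    | none =>
      (Function.update (Function.update σ h (some ⟨cl.left, some fresh, s'⟩))
        fresh (some ⟨some h, none, B⟩), fresh)

theorem Fin.snoc_mk_of_lt {α : Type*} {n : ℕ} (p : Fin n → α) (x : α) {m : ℕ} (h : m < n) :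
    (Fin.snoc p x : Fin (n + 1) → α) ⟨m, by omega⟩ = p ⟨m, h⟩ :=
  Fin.snoc_castSucc (α := fun _ => α) (i := ⟨m, h⟩) _ _

section LinkedList

variable {Γ L : Type*}

def IsLinkedList (σ : L → Option (Cell Γ L)) {n : ℕ} (c : Fin (n + 1) → L)
    (S : Fin (n + 1) → Γ) : Prop :=
  ∀ i : Fin (n + 1), σ (c i) = some
    { left := if _ : i.val = 0 then none
              else some (c ⟨i.val - 1, by omega⟩),
      right := if _ : i.val = n then none
               else some (c ⟨i.val + 1, by omega⟩),
      symbol := S i }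

def listTape (B : Γ) {n : ℕ} (S : Fin (n + 1) → Γ) (j : ℤ) : Γ :=
  if h : 0 ≤ j ∧ j < n + 1 then S ⟨j.toNat, by omega⟩ else B

theorem listTape_update (B : Γ) {n : ℕ} (S : Fin (n + 1) → Γ) (k : Fin (n + 1)) (s : Γ)
    (j : ℤ) : listTape B (Function.update S k s) j = if j = k then s else listTape B S j := by
  unfold listTape
  split_ifs with h₁ h₂ <;> try omega
  · rw [Function.update_apply, if_pos (Fin.ext (by simp; omega))]
  · rw [Function.update_apply, if_neg (fun h => h₂ (by rw [← h]; simp; omega))]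
  · rfl

theorem listTape_snoc_blank (B : Γ) {n : ℕ} (S : Fin (n + 1) → Γ) :
    listTape B (Fin.snoc S B : Fin (n + 2) → Γ) = listTape B S := by
  funext j
  unfold listTape
  split_ifs with h₁ h₂ <;> try omega
  · exact Fin.snoc_castSucc (α := fun _ => Γ) (i := ⟨j.toNat, by omega⟩) _ _
  · rw [show (⟨j.toNat, _⟩ : Fin (n + 2)) = Fin.last (n + 1) from Fin.ext (by simp; omega)]
    exact Fin.snoc_last (α := fun _ => Γ) _ _
  · rfl

theorem followR_none (σ : L → Option (Cell Γ L)) : ∀ m, followR σ none m = none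
  | 0 => rfl
  | m + 1 => followR_none σ m

theorem followL_none (σ : L → Option (Cell Γ L)) : ∀ m, followL σ none m = none
  | 0 => rfl
  | m + 1 => followL_none σ m

namespace IsLinkedList

variable {σ : L → Option (Cell Γ L)} {n : ℕ} {c : Fin (n + 1) → L} {S : Fin (n + 1) → Γ}

theorem followR_eq (hσ : IsLinkedList σ c S) (m : ℕ) (j : Fin (n + 1)) :
    followR σ (some (c j)) m =
      if h : j.val + m ≤ n then some (c ⟨j.val + m, by omega⟩) else none := by
  induction m generalizing j with
  | zero => rw [dif_pos (by omega)]; rfl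
  | succ m ih =>
    rw [followR, Option.bind_some, hσ j, Option.bind_some]
    by_cases hj : j.val = n
    · simp only [dif_pos hj, followR_none, dif_neg (show ¬j.val + (m + 1) ≤ n by omega)]
    · rw [dif_neg hj, ih]
      split_ifs with h₁ h₂ <;> simp only at h₁ <;> try omega
      · exact congrArg (some ∘ c) (Fin.ext (by simp only; omega))
      · rfl

theorem followL_eq (hσ : IsLinkedList σ c S) (m : ℕ) (j : Fin (n + 1)) :
    followL σ (some (c j)) m =
      if h : m ≤ j.val then some (c ⟨j.val - m, by omega⟩) else none := by
  induction m generalizing j with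
  | zero => rw [dif_pos (by omega)]; rfl
  | succ m ih =>
    rw [followL, Option.bind_some, hσ j, Option.bind_some]
    by_cases hj : j.val = 0
    · simp only [dif_pos hj, followL_none, dif_neg (show ¬m + 1 ≤ j.val by omega)]
    · rw [dif_neg hj, ih]
      split_ifs with h₁ h₂ <;> simp only at h₁ <;> try omega
      · exact congrArg (some ∘ c) (Fin.ext (by simp only; omega))
      · rfl

theorem tapeOf_eq (hσ : IsLinkedList σ c S) (B : Γ) (k : Fin (n + 1)) (i : ℤ) :
    tapeOf σ B (c k) i = listTape B S (k + i) := by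
  have symAt_cell (j : Fin (n + 1)) : symAt σ B (some (c j)) = S j := by
    simp only [symAt, Option.bind_some, hσ j]
  unfold tapeOf listTape
  by_cases hi : 0 ≤ i
  · rw [if_pos hi, hσ.followR_eq]
    split_ifs <;> try omega
    · rw [symAt_cell]; exact congrArg S (Fin.ext (by simp only; omega))
    · rfl
  · rw [if_neg hi, hσ.followL_eq]
    split_ifs <;> try omega
    · rw [symAt_cell]; exact congrArg S (Fin.ext (by simp only; omega))
    · rfl

variable [DecidableEq L]

theorem update_symbol (hσ : IsLinkedList σ c S) (hc : Function.Injective c) {k : Fin (n + 1)}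
    {cl : Cell Γ L} (hk : σ (c k) = some cl) (s : Γ) :
    IsLinkedList (Function.update σ (c k) (some ⟨cl.left, cl.right, s⟩)) c
      (Function.update S k s) := by
  intro i
  by_cases hik : i = k
  · subst hik
    obtain rfl := Option.some.inj ((hσ i).symm.trans hk)
    simp only [Function.update_self]
  · rw [Function.update_of_ne (hc.ne hik), hσ i, Function.update_of_ne hik]

theorem snoc (hσ : IsLinkedList σ c S) (hc : Function.Injective c) {fresh : L}
    (hfresh : fresh ∉ Set.range c) {cl : Cell Γ L} (hlast : σ (c (Fin.last n)) = some cl)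
    (b : Γ) :
    IsLinkedList
      (Function.update
        (Function.update σ (c (Fin.last n)) (some ⟨cl.left, some fresh, cl.symbol⟩))
        fresh (some ⟨some (c (Fin.last n)), none, b⟩))
      (Fin.snoc c fresh : Fin (n + 2) → L) (Fin.snoc S b : Fin (n + 2) → Γ) := by
  intro i
  induction i using Fin.lastCases with
  | last =>
    rw [Fin.snoc_last, Function.update_self, Fin.snoc_last,
      dif_neg (show (Fin.last (n + 1)).val ≠ 0 from n.succ_ne_zero),
      dif_pos (show (Fin.last (n + 1)).val = n + 1 from rfl)]
    exact congrArg (fun l => some (⟨some l, none, b⟩ : Cell Γ L))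
      (Fin.snoc_mk_of_lt c fresh n.lt_succ_self).symm
  | cast j =>
    rw [Fin.snoc_castSucc, Function.update_of_ne (fun h => hfresh ⟨j, h⟩), Fin.snoc_castSucc]
    by_cases hj : j = Fin.last n
    · subst hj
      obtain rfl := Option.some.inj ((hσ _).symm.trans hlast)
      rw [Function.update_self]
      congr 2 <;> split_ifs <;> simp only [Fin.val_castSucc, Fin.val_last] at * <;>
        first
        | rfl
        | omega
        | exact congrArg some (Fin.snoc_mk_of_lt _ _ _).symm
        | exact congrArg some (Fin.snoc_last (α := fun _ => L) _ _).symm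
    · rw [Function.update_of_ne (hc.ne hj), hσ j]
      have hjn : j.val ≠ n := fun h => hj (Fin.ext h)
      congr 2 <;> split_ifs <;> simp only [Fin.val_castSucc] at * <;>
        first | rfl | omega | exact congrArg some (Fin.snoc_mk_of_lt _ _ _).symm

end IsLinkedList

end LinkedList

section StepR

variable {Γ L : Type*} [DecidableEq L] {σ : L → Option (Cell Γ L)} {B : Γ} {h : L} {s' : Γ}
  {fresh : L} {cl : Cell Γ L}

theorem stepR_of_right_eq_some (hh : σ h = some cl) {r : L} (hr : cl.right = some r) :
    stepR σ B h s' fresh = (Function.update σ h (some ⟨cl.left, cl.right, s'⟩), r) := by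
  simp only [stepR, hh, hr]

theorem stepR_of_right_eq_none (hh : σ h = some cl) (hr : cl.right = none) :
    stepR σ B h s' fresh =
      (Function.update (Function.update σ h (some ⟨cl.left, some fresh, s'⟩)) fresh
        (some ⟨some h, none, B⟩), fresh) := by
  simp only [stepR, hh, hr]

theorem IsLinkedList.tapeOf_stepR {n : ℕ} {c : Fin (n + 1) → L} {S : Fin (n + 1) → Γ}
    (hσ : IsLinkedList σ c S) (hc : Function.Injective c) (hfresh : fresh ∉ Set.range c)
    (k : Fin (n + 1)) (i : ℤ) :
    tapeOf (stepR σ B (c k) s' fresh).1 B (stepR σ B (c k) s' fresh).2 i =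
      listTape B (Function.update S k s') (k + 1 + i) := by
  have hσ₁ := hσ.update_symbol hc (hσ k) s'
  by_cases hk : k = Fin.last n
  · subst hk
    have hσ₂ := hσ₁.snoc hc hfresh (Function.update_self _ _ _) B
    -- writing `s'` and then linking `fresh` is the single update performed by `stepR`
    rw [Function.update_idem] at hσ₂
    have := hσ₂.tapeOf_eq B (Fin.last (n + 1)) i
    rw [Fin.snoc_last, listTape_snoc_blank] at this
    rw [stepR_of_right_eq_none (hσ _) (dif_pos rfl)]
    convert this using 2
    simp only [Fin.val_last, Nat.cast_add, Nat.cast_one]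
  · have hk' : k.val ≠ n := fun h => hk (Fin.ext h)
    rw [stepR_of_right_eq_some (hσ k) (dif_neg hk'), hσ₁.tapeOf_eq]
    simp only [Nat.cast_add, Nat.cast_one]

end StepR

/-- on a well-formed doubly-linked list with head `c k`, the right-move
update realizes exactly the TM right-move transition on the induced tape:
the new induced tape `t'` satisfies `t' (-1) = s'` and `t' i = t (i+1)` otherwise. -/
theorem stepR_correct {Γ L : Type*} [DecidableEq L]
    (σ : L → Option (Cell Γ L)) (B : Γ)
    (n : ℕ) (c : Fin (n + 1) → L) (S : Fin (n + 1) → Γ)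
    (hinj : Function.Injective c)
    (hcell : ∀ i : Fin (n + 1), σ (c i) = some
      { left := if _ : i.val = 0 then none
                else some (c ⟨i.val - 1, by have := i.isLt; omega⟩),
        right := if _ : i.val = n then none
                 else some (c ⟨i.val + 1, by have := i.isLt; omega⟩),
        symbol := S i })
    (k : Fin (n + 1)) (fresh : L) (hfresh : fresh ∉ Set.range c) (s' : Γ) :
    tapeOf (stepR σ B (c k) s' fresh).1 B (stepR σ B (c k) s' fresh).2 =
      fun i : ℤ => if i = -1 then s' else tapeOf σ B (c k) (i + 1) := by
  have hσ : IsLinkedList σ c S := hcell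
  funext i
  rw [hσ.tapeOf_stepR hinj hfresh, listTape_update, hσ.tapeOf_eq]
  by_cases hi : i = -1
  · rw [if_pos (by omega), if_pos hi]
  · rw [if_neg (by omega), if_neg hi, add_assoc, add_comm 1 i]
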